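/- arXiv:1906.03328 — 2 statements merged into one kernel-verified Lean document; each statement's English description precedes it below -/
import Mathlib

section
/- The matching complex of the disjoint union of two paths on three vertices (2P₃) is a 4-cycle C₄; moreover, if M(G) is isomorphic to C₄ then G is isomorphic to 2P₃. -/
open SimpleGraph Finset

/-- Two edges (elements of `Sym2 V`) are incident if they share a vertex. -/
def Incid {V : Type} (e f : Sym2 V) : Prop := ∃ v, v ∈ e ∧ v ∈ f

/-- A face of the matching complex `M(G)`: a finite set of edges of `G`
that are pairwise non-incident (a matching of `G`). -/
def IsMatchingSet {V : Type} (G : SimpleGraph V) (s : Finset (Sym2 V)) : Prop :=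
  (∀ e ∈ s, e ∈ G.edgeSet) ∧ ∀ e ∈ s, ∀ f ∈ s, e ≠ f → ¬ Incid e f

/-- The 1-skeleton of the matching complex of `G`: the graph whose vertices are
the edges of `G`, two being adjacent iff they are distinct and non-incident. -/
def mcSkeleton {V : Type} (G : SimpleGraph V) : SimpleGraph G.edgeSet where
  Adj e f := e ≠ f ∧ ¬ Incid (e : Sym2 V) (f : Sym2 V)
  symm := ⟨fun e f h =>
    ⟨h.1.symm, fun hi => h.2 (Exists.elim hi fun v hv => ⟨v, hv.2, hv.1⟩)⟩⟩
  loopless := ⟨fun e h => h.1 rfl⟩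

/-- The disjoint union of two paths on three vertices. -/
def twoP3 : SimpleGraph (Fin 6) :=
  SimpleGraph.fromEdgeSet {s(0, 1), s(1, 2), s(3, 4), s(4, 5)}

/-- The cycle on `ZMod n`. -/
def cycZ (n : ℕ) : SimpleGraph (ZMod n) :=
  SimpleGraph.fromRel (fun i j => j = i + 1)

section Aux

instance {V : Type} [DecidableEq V] [Fintype V] (e f : Sym2 V) : Decidable (Incid e f) := by
  unfold Incid; infer_instance

instance : DecidableRel (cycZ 4).Adj := fun a b =>
  decidable_of_iff _ (SimpleGraph.fromRel_adj _ a b).symm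

instance {V : Type} [DecidableEq V] [Fintype V] (G : SimpleGraph V) :
    DecidableRel (mcSkeleton G).Adj := fun a b =>
  decidable_of_iff (a ≠ b ∧ ¬ Incid (a : Sym2 V) (b : Sym2 V)) Iff.rfl

lemma mcSkeleton_adj {V : Type} (G : SimpleGraph V) (e f : G.edgeSet) :
    (mcSkeleton G).Adj e f ↔ e ≠ f ∧ ¬ Incid (e : Sym2 V) (f : Sym2 V) := Iff.rfl

def E4 : Fin 4 → Sym2 (Fin 6) := ![s(0,1), s(3,4), s(1,2), s(4,5)]

lemma memE4 (i : Fin 4) : E4 i ∈ twoP3.edgeSet := by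
  fin_cases i <;> simp [twoP3, E4, SimpleGraph.edgeSet_fromEdgeSet]

def f4 : Sym2 (Fin 6) → ZMod 4 := fun z =>
  if z = s(0,1) then 0 else if z = s(3,4) then 1 else if z = s(1,2) then 2 else 3

lemma edge_cases (e : twoP3.edgeSet) : ∃ i : Fin 4, (e : Sym2 (Fin 6)) = E4 i := by
  obtain ⟨z, hz⟩ := e
  simp only [twoP3, SimpleGraph.edgeSet_fromEdgeSet, Set.mem_diff, Set.mem_insert_iff,
    Set.mem_singleton_iff] at hz
  rcases hz.1 with h | h | h | h
  exacts [⟨0, h⟩, ⟨2, h⟩, ⟨1, h⟩, ⟨3, h⟩]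

lemma key4 : ∀ i j : Fin 4, (cycZ 4).Adj (f4 (E4 i)) (f4 (E4 j)) ↔
    (E4 i ≠ E4 j ∧ ¬ Incid (E4 i) (E4 j)) := by decide

noncomputable def part1 : mcSkeleton twoP3 ≃g cycZ 4 where
  toFun := fun e => f4 e.1
  invFun := fun i => ⟨E4 i, memE4 i⟩
  left_inv := by
    rintro ⟨z, hz⟩
    obtain ⟨i, rfl⟩ := edge_cases ⟨z, hz⟩
    refine Subtype.ext ?_
    show E4 (f4 (E4 i)) = E4 i
    fin_cases i <;> decide
  right_inv := by
    intro i
    show f4 (E4 i) = i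
    revert i; decide
  map_rel_iff' := by
    rintro ⟨z, hz⟩ ⟨w, hw⟩
    obtain ⟨i, rfl⟩ := edge_cases ⟨z, hz⟩
    obtain ⟨j, rfl⟩ := edge_cases ⟨w, hw⟩
    rw [mcSkeleton_adj]
    have := key4 i j
    show (cycZ 4).Adj (f4 (E4 i)) (f4 (E4 j)) ↔ _
    rw [this]
    simp [Subtype.ext_iff]

lemma twoP3_adj (i j : Fin 6) : twoP3.Adj i j ↔
    (s(i,j) = s(0,1) ∨ s(i,j) = s(1,2) ∨ s(i,j) = s(3,4) ∨ s(i,j) = s(4,5)) := by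
  rw [twoP3, SimpleGraph.fromEdgeSet_adj]
  simp only [Set.mem_insert_iff, Set.mem_singleton_iff]
  constructor
  · tauto
  · intro h
    refine ⟨h, ?_⟩
    rcases h with h|h|h|h <;>
      (rw [Sym2.eq_iff] at h; rcases h with ⟨rfl,rfl⟩|⟨rfl,rfl⟩ <;> decide)

lemma part2 {V : Type} [Fintype V] [DecidableEq V] (G : SimpleGraph V)
    (hmin : ∀ v : V, ∃ w, G.Adj v w) (φ : mcSkeleton G ≃g cycZ 4) :
    Nonempty (G ≃g twoP3) := by
  classical
  set E : ZMod 4 → G.edgeSet := fun i => φ.symm i with hE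
  have hAdjE : ∀ i j : ZMod 4, (mcSkeleton G).Adj (E i) (E j) ↔ (cycZ 4).Adj i j :=
    fun i j => φ.symm.map_rel_iff
  have EneE : ∀ i j : ZMod 4, i ≠ j → (E i : Sym2 V) ≠ (E j : Sym2 V) :=
    fun i j hij h => hij (φ.symm.toEquiv.injective (Subtype.ext h))
  have nonInc : ∀ i j : ZMod 4, (cycZ 4).Adj i j → ¬ Incid (E i : Sym2 V) (E j : Sym2 V) :=
    fun i j h => ((hAdjE i j).mpr h).2
  have cross : ∀ {i j : ZMod 4}, (cycZ 4).Adj i j → ∀ {u : V},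
      u ∈ (E i : Sym2 V) → u ∈ (E j : Sym2 V) → False :=
    fun {i j} hij {u} hu hv => nonInc _ _ hij ⟨u, hu, hv⟩
  have inc : ∀ i j : ZMod 4, i ≠ j → ¬ (cycZ 4).Adj i j → Incid (E i : Sym2 V) (E j : Sym2 V) := by
    intro i j hij hna
    by_contra hni
    exact hna ((hAdjE i j).mp ⟨fun h => hij (by simpa [hE] using congrArg φ h), hni⟩)
  obtain ⟨b, hb0, hb2⟩ := inc 0 2 (by decide) (by decide)
  obtain ⟨x, hx1, hx3⟩ := inc 1 3 (by decide) (by decide)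
  set a := Sym2.Mem.other hb0 with ha
  set c := Sym2.Mem.other hb2 with hc
  set d := Sym2.Mem.other hx1 with hd
  set y := Sym2.Mem.other hx3 with hy
  have hE0 : s(b, a) = (E 0 : Sym2 V) := Sym2.other_spec hb0
  have hE2 : s(b, c) = (E 2 : Sym2 V) := Sym2.other_spec hb2
  have hE1 : s(x, d) = (E 1 : Sym2 V) := Sym2.other_spec hx1
  have hE3 : s(x, y) = (E 3 : Sym2 V) := Sym2.other_spec hx3
  have ha0 : a ∈ (E 0 : Sym2 V) := hE0 ▸ Sym2.mem_mk_right b a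
  have hc2 : c ∈ (E 2 : Sym2 V) := hE2 ▸ Sym2.mem_mk_right b c
  have hd1 : d ∈ (E 1 : Sym2 V) := hE1 ▸ Sym2.mem_mk_right x d
  have hy3 : y ∈ (E 3 : Sym2 V) := hE3 ▸ Sym2.mem_mk_right x y
  have hab : a ≠ b := Sym2.other_ne (G.not_isDiag_of_mem_edgeSet (E 0).2) hb0
  have hcb : c ≠ b := Sym2.other_ne (G.not_isDiag_of_mem_edgeSet (E 2).2) hb2
  have hdx : d ≠ x := Sym2.other_ne (G.not_isDiag_of_mem_edgeSet (E 1).2) hx1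
  have hyx : y ≠ x := Sym2.other_ne (G.not_isDiag_of_mem_edgeSet (E 3).2) hx3
  have hac : a ≠ c := fun h => EneE 0 2 (by decide) (hE0 ▸ hE2 ▸ (by rw [h]))
  have hdy : d ≠ y := fun h => EneE 1 3 (by decide) (hE1 ▸ hE3 ▸ (by rw [h]))
  have adj01 : (cycZ 4).Adj 0 1 := by decide
  have adj03 : (cycZ 4).Adj 0 3 := by decide
  have adj21 : (cycZ 4).Adj 2 1 := by decide
  have adj23 : (cycZ 4).Adj 2 3 := by decide
  have had : a ≠ d := fun h => cross adj01 ha0 (h ▸ hd1)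
  have hax : a ≠ x := fun h => cross adj01 ha0 (h ▸ hx1)
  have hay : a ≠ y := fun h => cross adj03 ha0 (h ▸ hy3)
  have hbd : b ≠ d := fun h => cross adj01 hb0 (h ▸ hd1)
  have hbx : b ≠ x := fun h => cross adj01 hb0 (h ▸ hx1)
  have hby : b ≠ y := fun h => cross adj03 hb0 (h ▸ hy3)
  have hcd : c ≠ d := fun h => cross adj21 hc2 (h ▸ hd1)
  have hcx : c ≠ x := fun h => cross adj21 hc2 (h ▸ hx1)
  have hcy : c ≠ y := fun h => cross adj23 hc2 (h ▸ hy3)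
  -- every edge of G is one of the four
  have edges : ∀ z ∈ G.edgeSet, z = (E 0 : Sym2 V) ∨ z = (E 1 : Sym2 V) ∨
      z = (E 2 : Sym2 V) ∨ z = (E 3 : Sym2 V) := by
    intro z hz
    have h4 : ∀ i : ZMod 4, i = 0 ∨ i = 1 ∨ i = 2 ∨ i = 3 := by decide
    have hzz : (E (φ ⟨z, hz⟩) : Sym2 V) = z := by
      show ((φ.symm (φ ⟨z, hz⟩)) : Sym2 V) = z
      rw [RelIso.symm_apply_apply]
    rcases h4 (φ ⟨z, hz⟩) with h|h|h|h <;> rw [h] at hzz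
    · exact Or.inl hzz.symm
    · exact Or.inr (Or.inl hzz.symm)
    · exact Or.inr (Or.inr (Or.inl hzz.symm))
    · exact Or.inr (Or.inr (Or.inr hzz.symm))
  -- vertex coverage
  have cover : ∀ v : V, v = a ∨ v = b ∨ v = c ∨ v = d ∨ v = x ∨ v = y := by
    intro v
    obtain ⟨w, hw⟩ := hmin v
    have hv : v ∈ s(v, w) := Sym2.mem_mk_left v w
    rcases edges _ (G.mem_edgeSet.mpr hw) with h|h|h|h <;> rw [h] at hv
    · rw [← hE0, Sym2.mem_iff] at hv; tauto
    · rw [← hE1, Sym2.mem_iff] at hv; tauto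
    · rw [← hE2, Sym2.mem_iff] at hv; tauto
    · rw [← hE3, Sym2.mem_iff] at hv; tauto
  set g : Fin 6 → V := ![a, b, c, d, x, y] with hg
  set f : V → Fin 6 := (fun v => if v = a then 0 else if v = b then 1 else if v = c then 2
    else if v = d then 3 else if v = x then 4 else 5) with hf
  have hfg : ∀ i : Fin 6, f (g i) = i := by
    intro i
    fin_cases i
    · show f a = 0; simp [hf]
    · show f b = 1; simp [hf, hab.symm]
    · show f c = 2; simp [hf, hac.symm, hcb]
    · show f d = 3; simp [hf, had.symm, hbd.symm, hcd.symm]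
    · show f x = 4; simp [hf, hax.symm, hbx.symm, hcx.symm, hdx.symm]
    · show f y = 5; simp [hf, hay.symm, hby.symm, hcy.symm, hdy.symm, hyx]
  have ginj : Function.Injective g := Function.LeftInverse.injective hfg
  have gsurj : Function.Surjective g := by
    intro v
    rcases cover v with h|h|h|h|h|h
    exacts [⟨0, h.symm⟩, ⟨1, h.symm⟩, ⟨2, h.symm⟩, ⟨3, h.symm⟩, ⟨4, h.symm⟩, ⟨5, h.symm⟩]
  have hAdjG : ∀ v w : V, G.Adj v w ↔
      (s(v,w) = s(b,a) ∨ s(v,w) = s(b,c) ∨ s(v,w) = s(x,d) ∨ s(v,w) = s(x,y)) := by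
    intro v w
    constructor
    · intro h
      rcases edges _ (G.mem_edgeSet.mpr h) with h'|h'|h'|h' <;> rw [h'] <;>
        [rw [← hE0]; rw [← hE1]; rw [← hE2]; rw [← hE3]] <;> tauto
    · intro h
      rw [← SimpleGraph.mem_edgeSet]
      rcases h with h|h|h|h <;> rw [h] <;>
        [rw [hE0]; rw [hE2]; rw [hE1]; rw [hE3]] <;> exact (E _).2
  have hsinj : Function.Injective (Sym2.map g) := Sym2.map.injective ginj
  refine ⟨RelIso.symm ⟨Equiv.ofBijective g ⟨ginj, gsurj⟩, ?_⟩⟩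
  intro i j
  show G.Adj (g i) (g j) ↔ twoP3.Adj i j
  rw [hAdjG, twoP3_adj]
  have r0 : (s(b,a) : Sym2 V) = Sym2.map g s(0,1) := by
    rw [Sym2.map_pair_eq]; exact Sym2.eq_swap.symm
  have r1 : (s(b,c) : Sym2 V) = Sym2.map g s(1,2) := by rw [Sym2.map_pair_eq]; exact rfl
  have r2 : (s(x,d) : Sym2 V) = Sym2.map g s(3,4) := by
    rw [Sym2.map_pair_eq]; exact Sym2.eq_swap.symm
  have r3 : (s(x,y) : Sym2 V) = Sym2.map g s(4,5) := by rw [Sym2.map_pair_eq]; exact rfl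
  have rij : (s(g i, g j) : Sym2 V) = Sym2.map g s(i,j) := (Sym2.map_pair_eq g i j).symm
  rw [rij, r0, r1, r2, r3, hsinj.eq_iff, hsinj.eq_iff, hsinj.eq_iff, hsinj.eq_iff]

end Aux

/-- `M(2P₃) ≅ C₄`; moreover, if `M(G) ≅ C₄` then `G ≅ 2P₃`. -/
theorem matchingComplex_C4 :
    Nonempty (mcSkeleton twoP3 ≃g cycZ 4) ∧
    (∀ {V : Type} [Fintype V] [DecidableEq V] (G : SimpleGraph V),
      (∀ v : V, ∃ w, G.Adj v w) →
      Nonempty (mcSkeleton G ≃g cycZ 4) → Nonempty (G ≃g twoP3)) := by 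
  refine ⟨⟨part1⟩, ?_⟩
  intro V _ _ G hmin hne
  obtain ⟨φ⟩ := hne
  exact part2 G hmin φ
end

section
/- For the spider graph Sp_k (k legs of length 2 sharing one central vertex), the matching complex M(Sp_k) is a simplicial (k−1)-ball consisting of a central (k−1)-simplex {v₁,…,v_k} together with k facets, the i-th obtained by replacing vᵢ with uᵢ. -/
open SimpleGraph Finset

/-- Vertices of the spider graph: the central vertex `none`, and for each leg
`i` an inner vertex `some (i, false)` and an outer vertex `some (i, true)`. -/
abbrev SpV (k : ℕ) : Type := Option (Fin k × Bool)

/-- The spider graph `Sp_k`: `k` legs of length 2 sharing the central vertex. -/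
def spider (k : ℕ) : SimpleGraph (SpV k) :=
  SimpleGraph.fromEdgeSet
    {e | (∃ i : Fin k, e = s((none : SpV k), some (i, false))) ∨
         (∃ i : Fin k, e = s((some (i, false) : SpV k), some (i, true)))}

/-- The edge `uᵢ` of `Sp_k`, incident to the central vertex. -/
def uEdge {k : ℕ} (i : Fin k) : Sym2 (SpV k) := s((none : SpV k), some (i, false))

/-- The outer edge `vᵢ` of the `i`-th leg of `Sp_k`. -/
def vEdge {k : ℕ} (i : Fin k) : Sym2 (SpV k) :=
  s((some (i, false) : SpV k), some (i, true))

lemma mem_spider_edgeSet {k : ℕ} (e : Sym2 (SpV k)) :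
    e ∈ (spider k).edgeSet ↔ (∃ i, e = uEdge i) ∨ (∃ i, e = vEdge i) := by
  rw [spider, edgeSet_fromEdgeSet]
  constructor
  · rintro ⟨h, _⟩; exact h
  · rintro h
    refine ⟨h, ?_⟩
    rcases h with ⟨i, rfl⟩ | ⟨i, rfl⟩ <;> simp [uEdge, vEdge]

lemma uedge_ne_vedge {k : ℕ} (i j : Fin k) : uEdge i ≠ vEdge j := by
  simp [uEdge, vEdge, Sym2.eq_iff]

lemma uEdge_inj {k : ℕ} {i j : Fin k} : uEdge i = uEdge j ↔ i = j := by
  simp [uEdge, Sym2.eq_iff]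

lemma vEdge_inj {k : ℕ} {i j : Fin k} : vEdge i = vEdge j ↔ i = j := by
  simp [vEdge, Sym2.eq_iff]

lemma incid_uu {k : ℕ} (i j : Fin k) : Incid (uEdge i) (uEdge j) :=
  ⟨none, by simp [uEdge], by simp [uEdge]⟩

lemma incid_uv {k : ℕ} (i j : Fin k) : Incid (uEdge i) (vEdge j) ↔ i = j := by
  constructor
  · rintro ⟨v, hv1, hv2⟩
    simp [uEdge, vEdge, Sym2.mem_iff] at hv1 hv2
    rcases hv1 with rfl | rfl <;> rcases hv2 with h | h <;> simp_all
  · rintro rfl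
    exact ⟨some (i, false), by simp [uEdge], by simp [vEdge]⟩

lemma incid_vv {k : ℕ} (i j : Fin k) : Incid (vEdge i) (vEdge j) ↔ i = j := by
  constructor
  · rintro ⟨v, hv1, hv2⟩
    simp [vEdge, Sym2.mem_iff] at hv1 hv2
    rcases hv1 with rfl | rfl <;> rcases hv2 with h | h <;> simp_all
  · rintro rfl
    exact ⟨some (i, false), by simp [vEdge], by simp [vEdge]⟩

lemma Incid.symm' {V : Type} {e f : Sym2 V} (h : Incid e f) : Incid f e :=
  Exists.elim h fun v hv => ⟨v, hv.2, hv.1⟩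

/-- If `s` is a maximal matching of the spider and `uEdge j ∉ s`, then `vEdge j ∈ s`. -/
lemma max_v {k : ℕ} {s : Finset (Sym2 (SpV k))}
    (hedge : ∀ e ∈ s, e ∈ (spider k).edgeSet)
    (hmat : ∀ e ∈ s, ∀ f ∈ s, e ≠ f → ¬ Incid e f)
    (hmax : ∀ t : Finset (Sym2 (SpV k)), IsMatchingSet (spider k) t → s ⊆ t → t = s)
    (j : Fin k) (hu : uEdge j ∉ s) : vEdge j ∈ s := by
  by_contra hv
  have hnincid : ∀ e ∈ s, ¬ Incid (vEdge j) e := by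
    intro e he hinc
    rcases (mem_spider_edgeSet e).1 (hedge e he) with ⟨l, rfl⟩ | ⟨l, rfl⟩
    · have : j = l := (incid_uv l j).1 hinc.symm' |>.symm
      exact hu (this ▸ he)
    · have : j = l := (incid_vv j l).1 hinc
      exact hv (this ▸ he)
  have ht : IsMatchingSet (spider k) (insert (vEdge j) s) := by
    constructor
    · intro e he
      rcases Finset.mem_insert.1 he with rfl | he
      · exact (mem_spider_edgeSet _).2 (Or.inr ⟨j, rfl⟩)
      · exact hedge e he
    · intro e he f hf hef
      rcases Finset.mem_insert.1 he with rfl | he <;>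
        rcases Finset.mem_insert.1 hf with rfl | hf
      · exact absurd rfl hef
      · exact hnincid f hf
      · exact fun h => hnincid e he h.symm'
      · exact hmat e he f hf hef
  have := hmax _ ht (Finset.subset_insert _ _)
  exact hv (this ▸ Finset.mem_insert_self (vEdge j) s)

/-- `M(Sp_k)` is a simplicial `(k-1)`-ball: its facets
(maximal faces, i.e. maximal matchings of `Sp_k`) are exactly the central
`(k-1)`-simplex `{v₁, …, v_k}` together with the `k` faces obtained from it by
replacing `vᵢ` with `uᵢ`. -/
theorem spider_facets (k : ℕ) (hk : 2 ≤ k) (s : Finset (Sym2 (SpV k))) :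
    (IsMatchingSet (spider k) s ∧
        ∀ t : Finset (Sym2 (SpV k)), IsMatchingSet (spider k) t → s ⊆ t → t = s) ↔
      (s = Finset.univ.image vEdge ∨
        ∃ i : Fin k,
          s = insert (uEdge i) ((Finset.univ.image vEdge).erase (vEdge i))) := by
  constructor
  · rintro ⟨⟨hedge, hmat⟩, hmax⟩
    by_cases hu : ∃ i, uEdge i ∈ s
    · obtain ⟨i, hi⟩ := hu
      right; refine ⟨i, ?_⟩
      apply Finset.ext
      intro e
      simp only [Finset.mem_insert, Finset.mem_erase, Finset.mem_image,
        Finset.mem_univ, true_and]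
      constructor
      · intro he
        rcases (mem_spider_edgeSet e).1 (hedge e he) with ⟨j, rfl⟩ | ⟨j, rfl⟩
        · left
          rcases eq_or_ne j i with rfl | hne
          · rfl
          · exact absurd (incid_uu j i) (hmat _ he _ hi (fun h => hne (uEdge_inj.1 h)))
        · right
          have hji : j ≠ i := by
            rintro rfl
            exact hmat _ hi _ he (uedge_ne_vedge j j) ((incid_uv j j).2 rfl)
          exact ⟨fun h => hji (vEdge_inj.1 h), j, rfl⟩
      · rintro (rfl | ⟨hne, j, rfl⟩)
        · exact hi
        · have huj : uEdge j ∉ s := by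
            intro hju
            have hji : j ≠ i := fun h => hne (by rw [h])
            exact hmat _ hju _ hi (fun h => hji (uEdge_inj.1 h)) (incid_uu j i)
          exact max_v hedge hmat hmax j huj
    · push_neg at hu
      left
      apply Finset.ext
      intro e
      simp only [Finset.mem_image, Finset.mem_univ, true_and]
      constructor
      · intro he
        rcases (mem_spider_edgeSet e).1 (hedge e he) with ⟨j, rfl⟩ | ⟨j, rfl⟩
        · exact absurd he (hu j)
        · exact ⟨j, rfl⟩
      · rintro ⟨j, rfl⟩
        exact max_v hedge hmat hmax j (hu j)
  · intro h
    have hmem : ∀ e ∈ s, (∃ i, e = uEdge i) ∨ (∃ i, e = vEdge i) := by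
      rcases h with rfl | ⟨i, rfl⟩
      · intro e he
        obtain ⟨j, -, rfl⟩ := Finset.mem_image.1 he
        exact Or.inr ⟨j, rfl⟩
      · intro e he
        rcases Finset.mem_insert.1 he with rfl | he
        · exact Or.inl ⟨i, rfl⟩
        · obtain ⟨j, -, rfl⟩ := Finset.mem_image.1 (Finset.mem_of_mem_erase he)
          exact Or.inr ⟨j, rfl⟩
    constructor
    · constructor
      · intro e he
        exact (mem_spider_edgeSet e).2 (hmem e he)
      · intro e he f hf hef hinc
        rcases h with rfl | ⟨i, rfl⟩
        · obtain ⟨j, -, rfl⟩ := Finset.mem_image.1 he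
          obtain ⟨l, -, rfl⟩ := Finset.mem_image.1 hf
          exact hef (vEdge_inj.2 ((incid_vv j l).1 hinc))
        · rcases Finset.mem_insert.1 he with rfl | he <;>
            rcases Finset.mem_insert.1 hf with rfl | hf
          · exact hef rfl
          · obtain ⟨hne, hfim⟩ := Finset.mem_erase.1 hf
            obtain ⟨l, -, rfl⟩ := Finset.mem_image.1 hfim
            exact hne (vEdge_inj.2 ((incid_uv i l).1 hinc).symm ▸ rfl)
          · obtain ⟨hne, heim⟩ := Finset.mem_erase.1 he
            obtain ⟨l, -, rfl⟩ := Finset.mem_image.1 heim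
            exact hne (vEdge_inj.2 ((incid_uv i l).1 hinc.symm').symm ▸ rfl)
          · obtain ⟨-, heim⟩ := Finset.mem_erase.1 he
            obtain ⟨-, hfim⟩ := Finset.mem_erase.1 hf
            obtain ⟨j, -, rfl⟩ := Finset.mem_image.1 heim
            obtain ⟨l, -, rfl⟩ := Finset.mem_image.1 hfim
            exact hef (vEdge_inj.2 ((incid_vv j l).1 hinc))
    · intro t ⟨htedge, htmat⟩ hst
      refine Finset.Subset.antisymm ?_ hst
      intro e het
      rcases (mem_spider_edgeSet e).1 (htedge e het) with ⟨j, rfl⟩ | ⟨j, rfl⟩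
      · -- uEdge j ∈ t
        rcases h with rfl | ⟨i, rfl⟩
        · -- vEdge j ∈ s ⊆ t, incident with uEdge j
          have hvj : vEdge j ∈ t := hst (Finset.mem_image.2 ⟨j, Finset.mem_univ j, rfl⟩)
          exact absurd ((incid_uv j j).2 rfl)
            (htmat _ het _ hvj (uedge_ne_vedge j j))
        · rcases eq_or_ne j i with rfl | hne
          · exact Finset.mem_insert_self _ _
          · have hui : uEdge i ∈ t := hst (Finset.mem_insert_self _ _)
            exact absurd (incid_uu j i)
              (htmat _ het _ hui (fun hh => hne (uEdge_inj.1 hh)))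
      · -- vEdge j ∈ t
        rcases h with rfl | ⟨i, rfl⟩
        · exact Finset.mem_image.2 ⟨j, Finset.mem_univ j, rfl⟩
        · rcases eq_or_ne j i with rfl | hne
          · have hui : uEdge j ∈ t := hst (Finset.mem_insert_self _ _)
            exact absurd ((incid_uv j j).2 rfl)
              (htmat _ hui _ het (uedge_ne_vedge j j))
          · exact Finset.mem_insert.2 (Or.inr (Finset.mem_erase.2
              ⟨fun hh => hne (vEdge_inj.1 hh),
               Finset.mem_image.2 ⟨j, Finset.mem_univ j, rfl⟩⟩))
end
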